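/- arXiv:1304.2510 — 10 statements merged into one kernel-verified Lean document; each statement's English description precedes it below -/
import Mathlib

section
/- Suppose α₁ᵀα₂ = 0. If α₂ᵀβ'₁ = 0 and α₁ᵀβ'₂ = 0, then N·R(β'₀₁,β'₀₂,β'₁,β'₂) = 0; if α₂ᵀβ₁ = 0 and α₁ᵀβ₂ = 0, then R(β₀₁,β₀₂,β₁,β₂)·N = 0. (Consequently the order −3 coefficient L_{−2}L'_{−1} + L_{−1}L'_{−2} − L'_{−2}L_{−1} − L'_{−1}L_{−2} of the commutator of two Lax operators vanishes.) -/
open Matrix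

/-- √2 as a complex number. -/
noncomputable def sq2 : ℂ := Real.sqrt 2

/-- For `x ∈ ℂ³`, `sk x` is the 3×3 skew-symmetric matrix with rows
`(0, x₃, −x₂)`, `(−x₃, 0, x₁)`, `(x₂, −x₁, 0)`. -/
noncomputable def sk (x : Fin 3 → ℂ) : Matrix (Fin 3) (Fin 3) ℂ :=
  !![0, x 2, -x 1; -x 2, 0, x 0; x 1, -x 0, 0]

/-- The cross product used in the paper, defined so that `[x]y = x × y`. -/
noncomputable def cross (x y : Fin 3 → ℂ) : Fin 3 → ℂ := sk x *ᵥ y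

/-- Index type for 7×7 matrices with block sizes (1,3,3). -/
abbrev I7 := Fin 1 ⊕ Fin 3 ⊕ Fin 3

/-- The G₂-matrix `G(a₁,a₂,A)` with block rows
`(0, −√2·a₂ᵀ, −√2·a₁ᵀ)`, `(√2·a₁, A, [a₂])`, `(√2·a₂, [a₁], −Aᵀ)`. -/
noncomputable def G (a₁ a₂ : Fin 3 → ℂ) (A : Matrix (Fin 3) (Fin 3) ℂ) :
    Matrix I7 I7 ℂ :=
  Matrix.of fun i j =>
    match i, j with
    | Sum.inl _, Sum.inl _ => 0
    | Sum.inl _, Sum.inr (Sum.inl k) => -sq2 * a₂ k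
    | Sum.inl _, Sum.inr (Sum.inr k) => -sq2 * a₁ k
    | Sum.inr (Sum.inl p), Sum.inl _ => sq2 * a₁ p
    | Sum.inr (Sum.inl p), Sum.inr (Sum.inl k) => A p k
    | Sum.inr (Sum.inl p), Sum.inr (Sum.inr k) => sk a₂ p k
    | Sum.inr (Sum.inr p), Sum.inl _ => sq2 * a₂ p
    | Sum.inr (Sum.inr p), Sum.inr (Sum.inl k) => sk a₁ p k
    | Sum.inr (Sum.inr p), Sum.inr (Sum.inr k) => -(Aᵀ p k)

/-- The residue-type matrix `R(β₀₁,β₀₂,β₁,β₂)` (depending on the fixed `α₁, α₂`), with block rows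
`(0, −√2·β₀₂·α₂ᵀ, −√2·β₀₁·α₁ᵀ)`, `(√2·β₀₁·α₁, α₁β₂ᵀ − β₁α₂ᵀ, β₀₂·[α₂])`,
`(√2·β₀₂·α₂, β₀₁·[α₁], α₂β₁ᵀ − β₂α₁ᵀ)`. -/
noncomputable def R (α₁ α₂ : Fin 3 → ℂ) (β₀₁ β₀₂ : ℂ) (β₁ β₂ : Fin 3 → ℂ) :
    Matrix I7 I7 ℂ :=
  Matrix.of fun i j =>
    match i, j with
    | Sum.inl _, Sum.inl _ => 0
    | Sum.inl _, Sum.inr (Sum.inl k) => -sq2 * β₀₂ * α₂ k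
    | Sum.inl _, Sum.inr (Sum.inr k) => -sq2 * β₀₁ * α₁ k
    | Sum.inr (Sum.inl p), Sum.inl _ => sq2 * β₀₁ * α₁ p
    | Sum.inr (Sum.inl p), Sum.inr (Sum.inl k) => (vecMulVec α₁ β₂ - vecMulVec β₁ α₂) p k
    | Sum.inr (Sum.inl p), Sum.inr (Sum.inr k) => β₀₂ * sk α₂ p k
    | Sum.inr (Sum.inr p), Sum.inl _ => sq2 * β₀₂ * α₂ p
    | Sum.inr (Sum.inr p), Sum.inr (Sum.inl k) => β₀₁ * sk α₁ p k
    | Sum.inr (Sum.inr p), Sum.inr (Sum.inr k) => (vecMulVec α₂ β₁ - vecMulVec β₂ α₁) p k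

/-- The block-diagonal matrix `N` with diagonal blocks `0` (1×1), `α₁α₂ᵀ`, `−α₂α₁ᵀ`. -/
noncomputable def Nmat (α₁ α₂ : Fin 3 → ℂ) : Matrix I7 I7 ℂ :=
  Matrix.of fun i j =>
    match i, j with
    | Sum.inr (Sum.inl p), Sum.inr (Sum.inl k) => vecMulVec α₁ α₂ p k
    | Sum.inr (Sum.inr p), Sum.inr (Sum.inr k) => -(vecMulVec α₂ α₁ p k)
    | _, _ => 0

/-- The (2,1) block of a 7×7 matrix (rows 2–4, column 1), as a vector in ℂ³. -/
noncomputable def blk21 (S : Matrix I7 I7 ℂ) : Fin 3 → ℂ :=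
  fun p => S (Sum.inr (Sum.inl p)) (Sum.inl 0)

/-- The (3,1) block of a 7×7 matrix (rows 5–7, column 1), as a vector in ℂ³. -/
noncomputable def blk31 (S : Matrix I7 I7 ℂ) : Fin 3 → ℂ :=
  fun p => S (Sum.inr (Sum.inr p)) (Sum.inl 0)

/-- The (2,2) block of a 7×7 matrix (rows 2–4, columns 2–4). -/
noncomputable def blk22 (S : Matrix I7 I7 ℂ) : Matrix (Fin 3) (Fin 3) ℂ :=
  Matrix.of fun p k => S (Sum.inr (Sum.inl p)) (Sum.inr (Sum.inl k))

/-- The (3,3) block of a 7×7 matrix (rows 5–7, columns 5–7). -/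
noncomputable def blk33 (S : Matrix I7 I7 ℂ) : Matrix (Fin 3) (Fin 3) ℂ :=
  Matrix.of fun p k => S (Sum.inr (Sum.inr p)) (Sum.inr (Sum.inr k))


/-- Suppose α₁ᵀα₂ = 0. If α₂ᵀβ'₁ = 0 and α₁ᵀβ'₂ = 0, then N·R(β'₀₁,β'₀₂,β'₁,β'₂) = 0;
if α₂ᵀβ₁ = 0 and α₁ᵀβ₂ = 0, then R(β₀₁,β₀₂,β₁,β₂)·N = 0. -/
theorem stmt5 (α₁ α₂ : Fin 3 → ℂ) (h12 : α₁ ⬝ᵥ α₂ = 0)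
    (β₀₁ β₀₂ β'₀₁ β'₀₂ : ℂ) (β₁ β₂ β'₁ β'₂ : Fin 3 → ℂ) :
    (α₂ ⬝ᵥ β'₁ = 0 → α₁ ⬝ᵥ β'₂ = 0 →
      Nmat α₁ α₂ * R α₁ α₂ β'₀₁ β'₀₂ β'₁ β'₂ = 0) ∧
    (α₂ ⬝ᵥ β₁ = 0 → α₁ ⬝ᵥ β₂ = 0 →
      R α₁ α₂ β₀₁ β₀₂ β₁ β₂ * Nmat α₁ α₂ = 0) := by
  have h : α₁ 0 * α₂ 0 + α₁ 1 * α₂ 1 + α₁ 2 * α₂ 2 = 0 := by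
    simpa [dotProduct, Fin.sum_univ_three] using h12
  constructor
  · intro h1' h2'
    have h1 : α₂ 0 * β'₁ 0 + α₂ 1 * β'₁ 1 + α₂ 2 * β'₁ 2 = 0 := by
      simpa [dotProduct, Fin.sum_univ_three] using h1'
    have h2 : α₁ 0 * β'₂ 0 + α₁ 1 * β'₂ 1 + α₁ 2 * β'₂ 2 = 0 := by
      simpa [dotProduct, Fin.sum_univ_three] using h2'
    ext i j
    rcases i with i | p | p <;> rcases j with j | k | k <;>
      simp only [Matrix.mul_apply, Fintype.sum_sum_type, Fin.sum_univ_three,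
        Nmat, R, Matrix.sub_apply, vecMulVec_apply, Matrix.of_apply, Matrix.zero_apply, Fin.sum_univ_one]
    · ring
    · ring
    · ring
    · linear_combination (sq2 * β'₀₁ * α₁ p) * h
    · linear_combination (α₁ p * β'₂ k) * h - (α₁ p * α₂ k) * h1
    · fin_cases k <;> simp [sk] <;> ring
    · linear_combination (-(sq2 * β'₀₂ * α₂ p)) * h
    · fin_cases k <;> simp [sk] <;> ring
    · linear_combination (-(α₂ p * β'₁ k)) * h + (α₂ p * α₁ k) * h2
  · intro h1' h2'
    have h1 : α₂ 0 * β₁ 0 + α₂ 1 * β₁ 1 + α₂ 2 * β₁ 2 = 0 := by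
      simpa [dotProduct, Fin.sum_univ_three] using h1'
    have h2 : α₁ 0 * β₂ 0 + α₁ 1 * β₂ 1 + α₁ 2 * β₂ 2 = 0 := by
      simpa [dotProduct, Fin.sum_univ_three] using h2'
    ext i j
    rcases i with i | p | p <;> rcases j with j | k | k <;>
      simp only [Matrix.mul_apply, Fintype.sum_sum_type, Fin.sum_univ_three,
        Nmat, R, Matrix.sub_apply, vecMulVec_apply, Matrix.of_apply, Matrix.zero_apply, Fin.sum_univ_one]
    · ring
    · linear_combination (-(sq2 * β₀₂ * α₂ k)) * h
    · linear_combination (sq2 * β₀₁ * α₁ k) * h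
    · ring
    · linear_combination (α₁ p * α₂ k) * h2 - (β₁ p * α₂ k) * h
    · fin_cases p <;> simp [sk] <;> ring
    · ring
    · fin_cases p <;> simp [sk] <;> ring
    · linear_combination (β₂ p * α₁ k) * h - (α₂ p * α₁ k) * h1
end

section
/- Suppose α₁ᵀα₂ = 0, α₁ᵀβ₂ = 0, α₂ᵀβ₁ = 0, α₁ᵀβ'₂ = 0, α₂ᵀβ'₁ = 0. Then the commutator R(β₀₁,β₀₂,β₁,β₂)·R(β'₀₁,β'₀₂,β'₁,β'₂) − R(β'₀₁,β'₀₂,β'₁,β'₂)·R(β₀₁,β₀₂,β₁,β₂) equals μ·N, where μ = 3·(β₀₂β'₀₁ − β₀₁β'₀₂) + β₁ᵀβ'₂ − β₂ᵀβ'₁. -/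
open Matrix

set_option maxHeartbeats 1600000 in
/-- Under the orthogonality relations, the commutator of two residue-type matrices
equals μ·N with μ = 3·(β₀₂β'₀₁ − β₀₁β'₀₂) + β₁ᵀβ'₂ − β₂ᵀβ'₁. -/
theorem stmt6 (α₁ α₂ : Fin 3 → ℂ) (h12 : α₁ ⬝ᵥ α₂ = 0)
    (β₀₁ β₀₂ β'₀₁ β'₀₂ : ℂ) (β₁ β₂ β'₁ β'₂ : Fin 3 → ℂ)
    (h1 : α₁ ⬝ᵥ β₂ = 0) (h2 : α₂ ⬝ᵥ β₁ = 0)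
    (h3 : α₁ ⬝ᵥ β'₂ = 0) (h4 : α₂ ⬝ᵥ β'₁ = 0) :
    R α₁ α₂ β₀₁ β₀₂ β₁ β₂ * R α₁ α₂ β'₀₁ β'₀₂ β'₁ β'₂
      - R α₁ α₂ β'₀₁ β'₀₂ β'₁ β'₂ * R α₁ α₂ β₀₁ β₀₂ β₁ β₂
      = (3 * (β₀₂ * β'₀₁ - β₀₁ * β'₀₂) + β₁ ⬝ᵥ β'₂ - β₂ ⬝ᵥ β'₁) • Nmat α₁ α₂ := by
  have hs : sq2 * sq2 = 2 := by
    have h : (Real.sqrt 2 : ℝ) * Real.sqrt 2 = 2 := Real.mul_self_sqrt (by norm_num)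
    rw [sq2, ← Complex.ofReal_mul, h]; norm_num
  simp only [dotProduct, Fin.sum_univ_three] at h12 h1 h2 h3 h4
  ext i j
  obtain i | i | i := i <;> obtain j | j | j := j <;> fin_cases i <;> fin_cases j <;>
    simp only [Matrix.sub_apply, Matrix.smul_apply, Matrix.mul_apply, R, Nmat, sk, Matrix.vecMulVec_apply, Matrix.of_apply, Fintype.sum_sum_type, Fin.sum_univ_three, Fin.sum_univ_one, Matrix.cons_val', Matrix.cons_val_zero, Matrix.cons_val_one, Matrix.head_cons, Matrix.head_fin_const, Matrix.empty_val', Matrix.cons_val_fin_one, Matrix.cons_val_two, Matrix.tail_cons, smul_eq_mul, dotProduct, Fin.isValue, Fin.reduceFinMk, Matrix.sub_apply, mul_zero, zero_mul, Matrix.vecMulVec_apply]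
  · -- entry (0,0)
    linear_combination (0:ℂ) * hs
  · -- entry (0,1)
    linear_combination ((1)*(sq2)*(β'₀₂)*(β₂ 0) + (-1)*(sq2)*(β₀₂)*(β'₂ 0)) * h12 + ((-1)*(sq2)*(α₂ 0)*(β'₀₂)) * h2 + ((1)*(sq2)*(α₂ 0)*(β₀₂)) * h4
  · -- entry (0,2)
    linear_combination ((1)*(sq2)*(β'₀₂)*(β₂ 1) + (-1)*(sq2)*(β₀₂)*(β'₂ 1)) * h12 + ((-1)*(sq2)*(α₂ 1)*(β'₀₂)) * h2 + ((1)*(sq2)*(α₂ 1)*(β₀₂)) * h4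
  · -- entry (0,3)
    linear_combination ((1)*(sq2)*(β'₀₂)*(β₂ 2) + (-1)*(sq2)*(β₀₂)*(β'₂ 2)) * h12 + ((-1)*(sq2)*(α₂ 2)*(β'₀₂)) * h2 + ((1)*(sq2)*(α₂ 2)*(β₀₂)) * h4
  · -- entry (0,4)
    linear_combination ((1)*(sq2)*(β'₀₁)*(β₁ 0) + (-1)*(sq2)*(β₀₁)*(β'₁ 0)) * h12 + ((-1)*(sq2)*(α₁ 0)*(β'₀₁)) * h1 + ((1)*(sq2)*(α₁ 0)*(β₀₁)) * h3
  · -- entry (0,5)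
    linear_combination ((1)*(sq2)*(β'₀₁)*(β₁ 1) + (-1)*(sq2)*(β₀₁)*(β'₁ 1)) * h12 + ((-1)*(sq2)*(α₁ 1)*(β'₀₁)) * h1 + ((1)*(sq2)*(α₁ 1)*(β₀₁)) * h3
  · -- entry (0,6)
    linear_combination ((1)*(sq2)*(β'₀₁)*(β₁ 2) + (-1)*(sq2)*(β₀₁)*(β'₁ 2)) * h12 + ((-1)*(sq2)*(α₁ 2)*(β'₀₁)) * h1 + ((1)*(sq2)*(α₁ 2)*(β₀₁)) * h3
  · -- entry (1,0)
    linear_combination ((-1)*(sq2)*(β'₀₁)*(β₁ 0) + (1)*(sq2)*(β₀₁)*(β'₁ 0)) * h12 + ((1)*(sq2)*(α₁ 0)*(β'₀₁)) * h1 + ((-1)*(sq2)*(α₁ 0)*(β₀₁)) * h3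
  · -- entry (2,0)
    linear_combination ((-1)*(sq2)*(β'₀₁)*(β₁ 1) + (1)*(sq2)*(β₀₁)*(β'₁ 1)) * h12 + ((1)*(sq2)*(α₁ 1)*(β'₀₁)) * h1 + ((-1)*(sq2)*(α₁ 1)*(β₀₁)) * h3
  · -- entry (3,0)
    linear_combination ((-1)*(sq2)*(β'₀₁)*(β₁ 2) + (1)*(sq2)*(β₀₁)*(β'₁ 2)) * h12 + ((1)*(sq2)*(α₁ 2)*(β'₀₁)) * h1 + ((-1)*(sq2)*(α₁ 2)*(β₀₁)) * h3
  · -- entry (1,1)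
    linear_combination ((1)*(α₁ 0)*(α₂ 0)*(β₀₂)*(β'₀₁) + (-1)*(α₁ 0)*(α₂ 0)*(β₀₁)*(β'₀₂)) * hs + ((1)*(β₂ 0)*(β'₁ 0) + (-1)*(β₁ 0)*(β'₂ 0) + (-1)*(β₀₂)*(β'₀₁) + (1)*(β₀₁)*(β'₀₂)) * h12 + ((-1)*(α₁ 2)*(β'₂ 2) + (-1)*(α₁ 1)*(β'₂ 1)) * h1 + ((1)*(α₂ 2)*(β'₁ 2) + (1)*(α₂ 1)*(β'₁ 1)) * h2 + ((1)*(α₁ 2)*(β₂ 2) + (1)*(α₁ 1)*(β₂ 1)) * h3 + ((-1)*(α₂ 2)*(β₁ 2) + (-1)*(α₂ 1)*(β₁ 1)) * h4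
  · -- entry (1,2)
    linear_combination ((1)*(α₁ 0)*(α₂ 1)*(β₀₂)*(β'₀₁) + (-1)*(α₁ 0)*(α₂ 1)*(β₀₁)*(β'₀₂)) * hs + ((1)*(β₂ 1)*(β'₁ 0) + (-1)*(β₁ 0)*(β'₂ 1)) * h12 + ((1)*(α₁ 0)*(β'₂ 1)) * h1 + ((-1)*(α₂ 1)*(β'₁ 0)) * h2 + ((-1)*(α₁ 0)*(β₂ 1)) * h3 + ((1)*(α₂ 1)*(β₁ 0)) * h4
  · -- entry (1,3)
    linear_combination ((1)*(α₁ 0)*(α₂ 2)*(β₀₂)*(β'₀₁) + (-1)*(α₁ 0)*(α₂ 2)*(β₀₁)*(β'₀₂)) * hs + ((1)*(β₂ 2)*(β'₁ 0) + (-1)*(β₁ 0)*(β'₂ 2)) * h12 + ((1)*(α₁ 0)*(β'₂ 2)) * h1 + ((-1)*(α₂ 2)*(β'₁ 0)) * h2 + ((-1)*(α₁ 0)*(β₂ 2)) * h3 + ((1)*(α₂ 2)*(β₁ 0)) * h4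
  · -- entry (2,1)
    linear_combination ((1)*(α₁ 1)*(α₂ 0)*(β₀₂)*(β'₀₁) + (-1)*(α₁ 1)*(α₂ 0)*(β₀₁)*(β'₀₂)) * hs + ((1)*(β₂ 0)*(β'₁ 1) + (-1)*(β₁ 1)*(β'₂ 0)) * h12 + ((1)*(α₁ 1)*(β'₂ 0)) * h1 + ((-1)*(α₂ 0)*(β'₁ 1)) * h2 + ((-1)*(α₁ 1)*(β₂ 0)) * h3 + ((1)*(α₂ 0)*(β₁ 1)) * h4
  · -- entry (2,2)
    linear_combination ((1)*(α₁ 1)*(α₂ 1)*(β₀₂)*(β'₀₁) + (-1)*(α₁ 1)*(α₂ 1)*(β₀₁)*(β'₀₂)) * hs + ((1)*(β₂ 1)*(β'₁ 1) + (-1)*(β₁ 1)*(β'₂ 1) + (-1)*(β₀₂)*(β'₀₁) + (1)*(β₀₁)*(β'₀₂)) * h12 + ((1)*(α₁ 1)*(β'₂ 1)) * h1 + ((-1)*(α₂ 1)*(β'₁ 1)) * h2 + ((-1)*(α₁ 1)*(β₂ 1)) * h3 + ((1)*(α₂ 1)*(β₁ 1)) * h4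
  · -- entry (2,3)
    linear_combination ((1)*(α₁ 1)*(α₂ 2)*(β₀₂)*(β'₀₁) + (-1)*(α₁ 1)*(α₂ 2)*(β₀₁)*(β'₀₂)) * hs + ((1)*(β₂ 2)*(β'₁ 1) + (-1)*(β₁ 1)*(β'₂ 2)) * h12 + ((1)*(α₁ 1)*(β'₂ 2)) * h1 + ((-1)*(α₂ 2)*(β'₁ 1)) * h2 + ((-1)*(α₁ 1)*(β₂ 2)) * h3 + ((1)*(α₂ 2)*(β₁ 1)) * h4
  · -- entry (3,1)
    linear_combination ((1)*(α₁ 2)*(α₂ 0)*(β₀₂)*(β'₀₁) + (-1)*(α₁ 2)*(α₂ 0)*(β₀₁)*(β'₀₂)) * hs + ((1)*(β₂ 0)*(β'₁ 2) + (-1)*(β₁ 2)*(β'₂ 0)) * h12 + ((1)*(α₁ 2)*(β'₂ 0)) * h1 + ((-1)*(α₂ 0)*(β'₁ 2)) * h2 + ((-1)*(α₁ 2)*(β₂ 0)) * h3 + ((1)*(α₂ 0)*(β₁ 2)) * h4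
  · -- entry (3,2)
    linear_combination ((1)*(α₁ 2)*(α₂ 1)*(β₀₂)*(β'₀₁) + (-1)*(α₁ 2)*(α₂ 1)*(β₀₁)*(β'₀₂)) * hs + ((1)*(β₂ 1)*(β'₁ 2) + (-1)*(β₁ 2)*(β'₂ 1)) * h12 + ((1)*(α₁ 2)*(β'₂ 1)) * h1 + ((-1)*(α₂ 1)*(β'₁ 2)) * h2 + ((-1)*(α₁ 2)*(β₂ 1)) * h3 + ((1)*(α₂ 1)*(β₁ 2)) * h4
  · -- entry (3,3)
    linear_combination ((1)*(α₁ 2)*(α₂ 2)*(β₀₂)*(β'₀₁) + (-1)*(α₁ 2)*(α₂ 2)*(β₀₁)*(β'₀₂)) * hs + ((1)*(β₂ 2)*(β'₁ 2) + (-1)*(β₁ 2)*(β'₂ 2) + (-1)*(β₀₂)*(β'₀₁) + (1)*(β₀₁)*(β'₀₂)) * h12 + ((1)*(α₁ 2)*(β'₂ 2)) * h1 + ((-1)*(α₂ 2)*(β'₁ 2)) * h2 + ((-1)*(α₁ 2)*(β₂ 2)) * h3 + ((1)*(α₂ 2)*(β₁ 2)) * h4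
  · -- entry (1,4)
    linear_combination (0:ℂ) * hs
  · -- entry (1,5)
    linear_combination ((-1)*(β'₀₂)*(β₂ 2) + (1)*(β₀₂)*(β'₂ 2)) * h12 + ((1)*(α₂ 2)*(β'₀₂)) * h1 + ((-1)*(α₂ 2)*(β₀₂)) * h3
  · -- entry (1,6)
    linear_combination ((1)*(β'₀₂)*(β₂ 1) + (-1)*(β₀₂)*(β'₂ 1)) * h12 + ((-1)*(α₂ 1)*(β'₀₂)) * h1 + ((1)*(α₂ 1)*(β₀₂)) * h3
  · -- entry (2,4)
    linear_combination ((1)*(β'₀₂)*(β₂ 2) + (-1)*(β₀₂)*(β'₂ 2)) * h12 + ((-1)*(α₂ 2)*(β'₀₂)) * h1 + ((1)*(α₂ 2)*(β₀₂)) * h3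
  · -- entry (2,5)
    linear_combination (0:ℂ) * hs
  · -- entry (2,6)
    linear_combination ((-1)*(β'₀₂)*(β₂ 0) + (1)*(β₀₂)*(β'₂ 0)) * h12 + ((1)*(α₂ 0)*(β'₀₂)) * h1 + ((-1)*(α₂ 0)*(β₀₂)) * h3
  · -- entry (3,4)
    linear_combination ((-1)*(β'₀₂)*(β₂ 1) + (1)*(β₀₂)*(β'₂ 1)) * h12 + ((1)*(α₂ 1)*(β'₀₂)) * h1 + ((-1)*(α₂ 1)*(β₀₂)) * h3
  · -- entry (3,5)
    linear_combination ((1)*(β'₀₂)*(β₂ 0) + (-1)*(β₀₂)*(β'₂ 0)) * h12 + ((-1)*(α₂ 0)*(β'₀₂)) * h1 + ((1)*(α₂ 0)*(β₀₂)) * h3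
  · -- entry (3,6)
    linear_combination (0:ℂ) * hs
  · -- entry (4,0)
    linear_combination ((-1)*(sq2)*(β'₀₂)*(β₂ 0) + (1)*(sq2)*(β₀₂)*(β'₂ 0)) * h12 + ((1)*(sq2)*(α₂ 0)*(β'₀₂)) * h2 + ((-1)*(sq2)*(α₂ 0)*(β₀₂)) * h4
  · -- entry (5,0)
    linear_combination ((-1)*(sq2)*(β'₀₂)*(β₂ 1) + (1)*(sq2)*(β₀₂)*(β'₂ 1)) * h12 + ((1)*(sq2)*(α₂ 1)*(β'₀₂)) * h2 + ((-1)*(sq2)*(α₂ 1)*(β₀₂)) * h4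
  · -- entry (6,0)
    linear_combination ((-1)*(sq2)*(β'₀₂)*(β₂ 2) + (1)*(sq2)*(β₀₂)*(β'₂ 2)) * h12 + ((1)*(sq2)*(α₂ 2)*(β'₀₂)) * h2 + ((-1)*(sq2)*(α₂ 2)*(β₀₂)) * h4
  · -- entry (4,1)
    linear_combination (0:ℂ) * hs
  · -- entry (4,2)
    linear_combination ((-1)*(β'₀₁)*(β₁ 2) + (1)*(β₀₁)*(β'₁ 2)) * h12 + ((1)*(α₁ 2)*(β'₀₁)) * h2 + ((-1)*(α₁ 2)*(β₀₁)) * h4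
  · -- entry (4,3)
    linear_combination ((1)*(β'₀₁)*(β₁ 1) + (-1)*(β₀₁)*(β'₁ 1)) * h12 + ((-1)*(α₁ 1)*(β'₀₁)) * h2 + ((1)*(α₁ 1)*(β₀₁)) * h4
  · -- entry (5,1)
    linear_combination ((1)*(β'₀₁)*(β₁ 2) + (-1)*(β₀₁)*(β'₁ 2)) * h12 + ((-1)*(α₁ 2)*(β'₀₁)) * h2 + ((1)*(α₁ 2)*(β₀₁)) * h4
  · -- entry (5,2)
    linear_combination (0:ℂ) * hs
  · -- entry (5,3)
    linear_combination ((-1)*(β'₀₁)*(β₁ 0) + (1)*(β₀₁)*(β'₁ 0)) * h12 + ((1)*(α₁ 0)*(β'₀₁)) * h2 + ((-1)*(α₁ 0)*(β₀₁)) * h4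
  · -- entry (6,1)
    linear_combination ((-1)*(β'₀₁)*(β₁ 1) + (1)*(β₀₁)*(β'₁ 1)) * h12 + ((1)*(α₁ 1)*(β'₀₁)) * h2 + ((-1)*(α₁ 1)*(β₀₁)) * h4
  · -- entry (6,2)
    linear_combination ((1)*(β'₀₁)*(β₁ 0) + (-1)*(β₀₁)*(β'₁ 0)) * h12 + ((-1)*(α₁ 0)*(β'₀₁)) * h2 + ((1)*(α₁ 0)*(β₀₁)) * h4
  · -- entry (6,3)
    linear_combination (0:ℂ) * hs
  · -- entry (4,4)
    linear_combination ((-1)*(α₁ 0)*(α₂ 0)*(β₀₂)*(β'₀₁) + (1)*(α₁ 0)*(α₂ 0)*(β₀₁)*(β'₀₂)) * hs + ((-1)*(β₂ 0)*(β'₁ 0) + (1)*(β₁ 0)*(β'₂ 0) + (1)*(β₀₂)*(β'₀₁) + (-1)*(β₀₁)*(β'₀₂)) * h12 + ((1)*(α₁ 2)*(β'₂ 2) + (1)*(α₁ 1)*(β'₂ 1)) * h1 + ((-1)*(α₂ 2)*(β'₁ 2) + (-1)*(α₂ 1)*(β'₁ 1)) * h2 + ((-1)*(α₁ 2)*(β₂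 2) + (-1)*(α₁ 1)*(β₂ 1)) * h3 + ((1)*(α₂ 2)*(β₁ 2) + (1)*(α₂ 1)*(β₁ 1)) * h4
  · -- entry (4,5)
    linear_combination ((-1)*(α₁ 1)*(α₂ 0)*(β₀₂)*(β'₀₁) + (1)*(α₁ 1)*(α₂ 0)*(β₀₁)*(β'₀₂)) * hs + ((-1)*(β₂ 0)*(β'₁ 1) + (1)*(β₁ 1)*(β'₂ 0)) * h12 + ((-1)*(α₁ 1)*(β'₂ 0)) * h1 + ((1)*(α₂ 0)*(β'₁ 1)) * h2 + ((1)*(α₁ 1)*(β₂ 0)) * h3 + ((-1)*(α₂ 0)*(β₁ 1)) * h4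
  · -- entry (4,6)
    linear_combination ((-1)*(α₁ 2)*(α₂ 0)*(β₀₂)*(β'₀₁) + (1)*(α₁ 2)*(α₂ 0)*(β₀₁)*(β'₀₂)) * hs + ((-1)*(β₂ 0)*(β'₁ 2) + (1)*(β₁ 2)*(β'₂ 0)) * h12 + ((-1)*(α₁ 2)*(β'₂ 0)) * h1 + ((1)*(α₂ 0)*(β'₁ 2)) * h2 + ((1)*(α₁ 2)*(β₂ 0)) * h3 + ((-1)*(α₂ 0)*(β₁ 2)) * h4
  · -- entry (5,4)
    linear_combination ((-1)*(α₁ 0)*(α₂ 1)*(β₀₂)*(β'₀₁) + (1)*(α₁ 0)*(α₂ 1)*(β₀₁)*(β'₀₂)) * hs + ((-1)*(β₂ 1)*(β'₁ 0) + (1)*(β₁ 0)*(β'₂ 1)) * h12 + ((-1)*(α₁ 0)*(β'₂ 1)) * h1 + ((1)*(α₂ 1)*(β'₁ 0)) * h2 + ((1)*(α₁ 0)*(β₂ 1)) * h3 + ((-1)*(α₂ 1)*(β₁ 0)) * h4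
  · -- entry (5,5)
    linear_combination ((-1)*(α₁ 1)*(α₂ 1)*(β₀₂)*(β'₀₁) + (1)*(α₁ 1)*(α₂ 1)*(β₀₁)*(β'₀₂)) * hs + ((-1)*(β₂ 1)*(β'₁ 1) + (1)*(β₁ 1)*(β'₂ 1) + (1)*(β₀₂)*(β'₀₁) + (-1)*(β₀₁)*(β'₀₂)) * h12 + ((-1)*(α₁ 1)*(β'₂ 1)) * h1 + ((1)*(α₂ 1)*(β'₁ 1)) * h2 + ((1)*(α₁ 1)*(β₂ 1)) * h3 + ((-1)*(α₂ 1)*(β₁ 1)) * h4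
  · -- entry (5,6)
    linear_combination ((-1)*(α₁ 2)*(α₂ 1)*(β₀₂)*(β'₀₁) + (1)*(α₁ 2)*(α₂ 1)*(β₀₁)*(β'₀₂)) * hs + ((-1)*(β₂ 1)*(β'₁ 2) + (1)*(β₁ 2)*(β'₂ 1)) * h12 + ((-1)*(α₁ 2)*(β'₂ 1)) * h1 + ((1)*(α₂ 1)*(β'₁ 2)) * h2 + ((1)*(α₁ 2)*(β₂ 1)) * h3 + ((-1)*(α₂ 1)*(β₁ 2)) * h4
  · -- entry (6,4)
    linear_combination ((-1)*(α₁ 0)*(α₂ 2)*(β₀₂)*(β'₀₁) + (1)*(α₁ 0)*(α₂ 2)*(β₀₁)*(β'₀₂)) * hs + ((-1)*(β₂ 2)*(β'₁ 0) + (1)*(β₁ 0)*(β'₂ 2)) * h12 + ((-1)*(α₁ 0)*(β'₂ 2)) * h1 + ((1)*(α₂ 2)*(β'₁ 0)) * h2 + ((1)*(α₁ 0)*(β₂ 2)) * h3 + ((-1)*(α₂ 2)*(β₁ 0)) * h4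
  · -- entry (6,5)
    linear_combination ((-1)*(α₁ 1)*(α₂ 2)*(β₀₂)*(β'₀₁) + (1)*(α₁ 1)*(α₂ 2)*(β₀₁)*(β'₀₂)) * hs + ((-1)*(β₂ 2)*(β'₁ 1) + (1)*(β₁ 1)*(β'₂ 2)) * h12 + ((-1)*(α₁ 1)*(β'₂ 2)) * h1 + ((1)*(α₂ 2)*(β'₁ 1)) * h2 + ((1)*(α₁ 1)*(β₂ 2)) * h3 + ((-1)*(α₂ 2)*(β₁ 1)) * h4
  · -- entry (6,6)
    linear_combination ((-1)*(α₁ 2)*(α₂ 2)*(β₀₂)*(β'₀₁) + (1)*(α₁ 2)*(α₂ 2)*(β₀₁)*(β'₀₂)) * hs + ((-1)*(β₂ 2)*(β'₁ 2) + (1)*(β₁ 2)*(β'₂ 2) + (1)*(β₀₂)*(β'₀₁) + (-1)*(β₀₁)*(β'₀₂)) * h12 + ((-1)*(α₁ 2)*(β'₂ 2)) * h1 + ((1)*(α₂ 2)*(β'₁ 2)) * h2 + ((1)*(α₁ 2)*(β₂ 2)) * h3 + ((-1)*(α₂ 2)*(β₁ 2)) * h4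
end

section
/- Suppose α₁ᵀα₂ = 0; α₁ᵀβ₂ = α₂ᵀβ₁ = α₁ᵀβ'₂ = α₂ᵀβ'₁ = 0; the vectors a₁, a₂, a'₁, a'₂ ∈ ℂ³ and traceless 3×3 matrices A, A' satisfy α₁ᵀa₂ = α₂ᵀa₁ = α₁ᵀa'₂ = α₂ᵀa'₁ = 0, A·α₁ = κ₁·α₁, Aᵀ·α₂ = −κ₂·α₂, A'·α₁ = κ'₁·α₁, A'ᵀ·α₂ = −κ'₂·α₂ for some κ₁, κ₂, κ'₁, κ'₂ ∈ ℂ; and a₂ × α₂ and a'₂ × α₂ are scalar multiples of α₁ while a₁ × α₁ and a'₁ × α₁ are scalar multiples of α₂. Then there exist β̃₀₁, β̃₀₂ ∈ ℂ and β̃₁, β̃₂ ∈ ℂ³ with α₁ᵀβ̃₂ = 0 and α₂ᵀβ̃₁ = 0 such that G(a₁,a₂,A)·R(β'₀₁,β'₀₂,β'₁,β'₂) + R(β₀₁,β₀₂,β₁,β₂)·G(a'₁,a'₂,A') − G(a'₁,a'₂,A')·R(β₀₁,β₀₂,β₁,β₂) − R(β'₀₁,β'₀₂,β'₁,β'₂)·G(a₁,a₂,A)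 = R(β̃₀₁,β̃₀₂,β̃₁,β̃₂). -/
open Matrix

-- test helper lemmas
lemma sq2_sq : sq2 * sq2 = 2 := by
  rw [sq2, ← Complex.ofReal_mul, Real.mul_self_sqrt (by norm_num)]
  norm_num

lemma vmv_mulVec (x y z : Fin 3 → ℂ) : vecMulVec x y *ᵥ z = (y ⬝ᵥ z) • x := by
  funext p
  simp [Matrix.mulVec, Matrix.vecMulVec_apply, dotProduct, Fin.sum_univ_three]
  ring

lemma mul_vmv (A : Matrix (Fin 3) (Fin 3) ℂ) (x y : Fin 3 → ℂ) :
    A * vecMulVec x y = vecMulVec (A *ᵥ x) y := by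
  ext p k
  simp [Matrix.mul_apply, Matrix.vecMulVec_apply, Matrix.mulVec, dotProduct, Fin.sum_univ_three]
  ring

lemma vmv_mul (x y : Fin 3 → ℂ) (A : Matrix (Fin 3) (Fin 3) ℂ) :
    vecMulVec x y * A = vecMulVec x (Aᵀ *ᵥ y) := by
  ext p k
  simp [Matrix.mul_apply, Matrix.vecMulVec_apply, Matrix.mulVec, dotProduct, Fin.sum_univ_three]
  ring

lemma vmv_smul_left (c : ℂ) (x y : Fin 3 → ℂ) : vecMulVec (c • x) y = c • vecMulVec x y := by
  ext p k; simp [Matrix.vecMulVec_apply]; ring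

lemma vmv_smul_right (c : ℂ) (x y : Fin 3 → ℂ) : vecMulVec x (c • y) = c • vecMulVec x y := by
  ext p k; simp [Matrix.vecMulVec_apply]; ring

lemma cross_anti (x y : Fin 3 → ℂ) : cross x y = -cross y x := by
  funext p
  fin_cases p <;>
    simp [cross, sk, Matrix.mulVec, dotProduct, Fin.sum_univ_three] <;> ring

lemma cross_smul_left (c : ℂ) (x y : Fin 3 → ℂ) : cross (c • x) y = c • cross x y := by
  funext p
  fin_cases p <;>
    simp [cross, sk, Matrix.mulVec, dotProduct, Fin.sum_univ_three] <;> ring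

lemma cross_smul_right (c : ℂ) (x y : Fin 3 → ℂ) : cross x (c • y) = c • cross x y := by
  rw [cross, Matrix.mulVec_smul]; rfl

/-- Correction term for the non-traceless bracket. -/
noncomputable def Ecorr (v w : Fin 3 → ℂ) : Matrix I7 I7 ℂ :=
  Matrix.of fun i j =>
    match i, j with
    | Sum.inr (Sum.inl p), Sum.inr (Sum.inr k) => sk v p k
    | Sum.inr (Sum.inr p), Sum.inr (Sum.inl k) => sk w p k
    | _, _ => 0

lemma Ecorr_zero : Ecorr 0 0 = 0 := by
  ext i j
  rcases i with i | i | i <;> rcases j with j | j | j <;>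
    simp [Ecorr, sk] <;> fin_cases i <;> fin_cases j <;> simp

lemma G_add (x y z w : Fin 3 → ℂ) (M N : Matrix (Fin 3) (Fin 3) ℂ) :
    G x y M + G z w N = G (x + z) (y + w) (M + N) := by
  ext i j
  rcases i with i | i | i <;> rcases j with j | j | j <;>
    simp [G, sk] <;> fin_cases i <;> fin_cases j <;> simp <;> ring

lemma R_eq_G (α₁ α₂ : Fin 3 → ℂ) (p q : ℂ) (u v : Fin 3 → ℂ) :
    R α₁ α₂ p q u v = G (p • α₁) (q • α₂) (vecMulVec α₁ v - vecMulVec u α₂) := by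
  ext i j
  rcases i with i | i | i <;> rcases j with j | j | j <;>
    simp [G, R, sk, Matrix.vecMulVec_apply] <;> fin_cases i <;> fin_cases j <;> simp <;> ring

lemma sq2_pow : sq2 ^ 2 = 2 := by rw [pow_two, sq2_sq]

set_option maxHeartbeats 2000000 in
lemma G_brk (a₁ a₂ b₁ b₂ : Fin 3 → ℂ) (A B : Matrix (Fin 3) (Fin 3) ℂ) :
    G a₁ a₂ A * G b₁ b₂ B - G b₁ b₂ B * G a₁ a₂ A =
    G (A *ᵥ b₁ - B *ᵥ a₁ + (2 : ℂ) • cross a₂ b₂)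
      (Bᵀ *ᵥ a₂ - Aᵀ *ᵥ b₂ + (2 : ℂ) • cross a₁ b₁)
      (A * B - B * A + (3 : ℂ) • (vecMulVec b₁ a₂ - vecMulVec a₁ b₂)
        - (a₂ ⬝ᵥ b₁ - a₁ ⬝ᵥ b₂) • (1 : Matrix (Fin 3) (Fin 3) ℂ))
    + Ecorr (A.trace • b₂ - B.trace • a₂) (B.trace • a₁ - A.trace • b₁) := by
  ext i j
  rcases i with i | i | i <;> rcases j with j | j | j <;>
    simp only [Matrix.sub_apply, Matrix.add_apply, Matrix.mul_apply, Fintype.sum_sum_type,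
      Fin.sum_univ_three, Fin.sum_univ_one, G, Ecorr, Matrix.of_apply, Matrix.smul_apply,
      Matrix.one_apply, Matrix.vecMulVec_apply, Pi.add_apply, Pi.sub_apply, Pi.smul_apply,
      smul_eq_mul, Matrix.trace, Matrix.diag, Matrix.transpose_apply, Matrix.mulVec,
      dotProduct, cross] <;>
    fin_cases i <;> fin_cases j <;>
    simp [sk, Fin.reduceFinMk, Matrix.mulVec, dotProduct, Fin.sum_univ_three, cross,
      Matrix.vecHead, Matrix.vecTail, Pi.add_apply, Pi.sub_apply, Pi.smul_apply, smul_eq_mul,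
      Matrix.transpose_apply, Matrix.one_apply] <;>
    (try ring_nf) <;> (try simp only [sq2_pow]) <;> (try norm_num) <;> (try ring_nf)

lemma vmv_transpose (x y : Fin 3 → ℂ) : (vecMulVec x y)ᵀ = vecMulVec y x := by
  ext p k; simp [Matrix.vecMulVec_apply, Matrix.transpose_apply]; ring

lemma vmv_add_left (x z y : Fin 3 → ℂ) : vecMulVec (x + z) y = vecMulVec x y + vecMulVec z y := by
  ext p k; simp [Matrix.vecMulVec_apply]; ring

lemma vmv_add_right (x y z : Fin 3 → ℂ) : vecMulVec x (y + z) = vecMulVec x y + vecMulVec x z := by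
  ext p k; simp [Matrix.vecMulVec_apply]; ring

lemma vmv_sub_left (x z y : Fin 3 → ℂ) : vecMulVec (x - z) y = vecMulVec x y - vecMulVec z y := by
  ext p k; simp [Matrix.vecMulVec_apply]; ring

lemma vmv_sub_right (x y z : Fin 3 → ℂ) : vecMulVec x (y - z) = vecMulVec x y - vecMulVec x z := by
  ext p k; simp [Matrix.vecMulVec_apply]; ring

lemma trace_vmv_sub (x y u v : Fin 3 → ℂ) :
    (vecMulVec x y - vecMulVec u v).trace = x ⬝ᵥ y - u ⬝ᵥ v := by
  simp [Matrix.trace, Matrix.diag, Matrix.sub_apply, Matrix.vecMulVec_apply,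
    Fin.sum_univ_three, dotProduct]

/-- Under the stated orthogonality, eigenvalue and cross-product hypotheses, the
combination G(a)·R(β') + R(β)·G(a') − G(a')·R(β) − R(β')·G(a) is again a residue-type matrix
R(β̃₀₁,β̃₀₂,β̃₁,β̃₂) with α₁ᵀβ̃₂ = 0 and α₂ᵀβ̃₁ = 0. -/
theorem stmt7 (α₁ α₂ : Fin 3 → ℂ) (h12 : α₁ ⬝ᵥ α₂ = 0)
    (β₀₁ β₀₂ β'₀₁ β'₀₂ : ℂ) (β₁ β₂ β'₁ β'₂ : Fin 3 → ℂ)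
    (hb1 : α₁ ⬝ᵥ β₂ = 0) (hb2 : α₂ ⬝ᵥ β₁ = 0)
    (hb3 : α₁ ⬝ᵥ β'₂ = 0) (hb4 : α₂ ⬝ᵥ β'₁ = 0)
    (a₁ a₂ a'₁ a'₂ : Fin 3 → ℂ) (A A' : Matrix (Fin 3) (Fin 3) ℂ)
    (hA : A.trace = 0) (hA' : A'.trace = 0)
    (ha1 : α₁ ⬝ᵥ a₂ = 0) (ha2 : α₂ ⬝ᵥ a₁ = 0)
    (ha3 : α₁ ⬝ᵥ a'₂ = 0) (ha4 : α₂ ⬝ᵥ a'₁ = 0)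
    (κ₁ κ₂ κ'₁ κ'₂ : ℂ)
    (he1 : A *ᵥ α₁ = κ₁ • α₁) (he2 : Aᵀ *ᵥ α₂ = (-κ₂) • α₂)
    (he3 : A' *ᵥ α₁ = κ'₁ • α₁) (he4 : A'ᵀ *ᵥ α₂ = (-κ'₂) • α₂)
    (hc1 : ∃ l : ℂ, cross a₂ α₂ = l • α₁) (hc2 : ∃ l : ℂ, cross a'₂ α₂ = l • α₁)
    (hc3 : ∃ l : ℂ, cross a₁ α₁ = l • α₂) (hc4 : ∃ l : ℂ, cross a'₁ α₁ = l • α₂) :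
    ∃ (tβ₀₁ tβ₀₂ : ℂ) (tβ₁ tβ₂ : Fin 3 → ℂ),
      α₁ ⬝ᵥ tβ₂ = 0 ∧ α₂ ⬝ᵥ tβ₁ = 0 ∧
      G a₁ a₂ A * R α₁ α₂ β'₀₁ β'₀₂ β'₁ β'₂
        + R α₁ α₂ β₀₁ β₀₂ β₁ β₂ * G a'₁ a'₂ A'
        - G a'₁ a'₂ A' * R α₁ α₂ β₀₁ β₀₂ β₁ β₂
        - R α₁ α₂ β'₀₁ β'₀₂ β'₁ β'₂ * G a₁ a₂ A
      = R α₁ α₂ tβ₀₁ tβ₀₂ tβ₁ tβ₂ := by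
  obtain ⟨l₁, hc1⟩ := hc1
  obtain ⟨l₂, hc2⟩ := hc2
  obtain ⟨m₁, hc3⟩ := hc3
  obtain ⟨m₂, hc4⟩ := hc4
  refine ⟨β'₀₁*κ₁ - β'₂ ⬝ᵥ a₁ + 2*β'₀₂*l₁ + β₂ ⬝ᵥ a'₁ - β₀₁*κ'₁ - 2*β₀₂*l₂,
          β'₀₂*κ₂ - β'₁ ⬝ᵥ a₂ + 2*β'₀₁*m₁ + β₁ ⬝ᵥ a'₂ - β₀₂*κ'₂ - 2*β₀₁*m₂,
          A *ᵥ β'₁ + κ₂ • β'₁ - κ'₂ • β₁ - A' *ᵥ β₁ + (3*β'₀₂) • a₁ - (3*β₀₂) • a'₁,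
          κ₁ • β'₂ - Aᵀ *ᵥ β'₂ + A'ᵀ *ᵥ β₂ - κ'₁ • β₂ + (3*β'₀₁) • a₂ - (3*β₀₁) • a'₂,
          ?_, ?_, ?_⟩
  · -- α₁ ⬝ᵥ tβ₂ = 0
    have k1 : α₁ ⬝ᵥ (Aᵀ *ᵥ β'₂) = 0 := by
      rw [Matrix.dotProduct_mulVec, Matrix.vecMul_transpose, he1, smul_dotProduct, hb3,
        smul_zero]
    have k2 : α₁ ⬝ᵥ (A'ᵀ *ᵥ β₂) = 0 := by
      rw [Matrix.dotProduct_mulVec, Matrix.vecMul_transpose, he3, smul_dotProduct, hb1,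
        smul_zero]
    simp [dotProduct_add, dotProduct_sub, dotProduct_smul, k1, k2, hb1, hb3, ha1, ha3]
  · -- α₂ ⬝ᵥ tβ₁ = 0
    have k1 : α₂ ⬝ᵥ (A *ᵥ β'₁) = 0 := by
      rw [Matrix.dotProduct_mulVec, ← Matrix.mulVec_transpose, he2, smul_dotProduct, hb4,
        smul_zero]
    have k2 : α₂ ⬝ᵥ (A' *ᵥ β₁) = 0 := by
      rw [Matrix.dotProduct_mulVec, ← Matrix.mulVec_transpose, he4, smul_dotProduct, hb2,
        smul_zero]
    simp [dotProduct_add, dotProduct_sub, dotProduct_smul, k1, k2, hb2, hb4, ha2, ha4]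
  · -- the matrix identity
    have trB : (vecMulVec α₁ β₂ - vecMulVec β₁ α₂).trace = 0 := by
      rw [trace_vmv_sub, hb1, dotProduct_comm, hb2, sub_zero]
    have trB' : (vecMulVec α₁ β'₂ - vecMulVec β'₁ α₂).trace = 0 := by
      rw [trace_vmv_sub, hb3, dotProduct_comm, hb4, sub_zero]
    have E1 : A *ᵥ (β'₀₁ • α₁) - (vecMulVec α₁ β'₂ - vecMulVec β'₁ α₂) *ᵥ a₁
          + (2:ℂ) • cross a₂ (β'₀₂ • α₂)
          + ((vecMulVec α₁ β₂ - vecMulVec β₁ α₂) *ᵥ a'₁ - A' *ᵥ (β₀₁ • α₁)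
            + (2:ℂ) • cross (β₀₂ • α₂) a'₂)
        = (β'₀₁*κ₁ - β'₂ ⬝ᵥ a₁ + 2*β'₀₂*l₁ + β₂ ⬝ᵥ a'₁ - β₀₁*κ'₁ - 2*β₀₂*l₂) • α₁ := by
      rw [Matrix.mulVec_smul, he1, Matrix.mulVec_smul, he3, Matrix.sub_mulVec, vmv_mulVec,
        vmv_mulVec, ha2, Matrix.sub_mulVec, vmv_mulVec, vmv_mulVec, ha4, cross_smul_right,
        hc1, cross_smul_left, cross_anti α₂ a'₂, hc2]
      module
    have E2 : (vecMulVec α₁ β'₂ - vecMulVec β'₁ α₂)ᵀ *ᵥ a₂ - Aᵀ *ᵥ (β'₀₂ • α₂)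
          + (2:ℂ) • cross a₁ (β'₀₁ • α₁)
          + (A'ᵀ *ᵥ (β₀₂ • α₂) - (vecMulVec α₁ β₂ - vecMulVec β₁ α₂)ᵀ *ᵥ a'₂
            + (2:ℂ) • cross (β₀₁ • α₁) a'₁)
        = (β'₀₂*κ₂ - β'₁ ⬝ᵥ a₂ + 2*β'₀₁*m₁ + β₁ ⬝ᵥ a'₂ - β₀₂*κ'₂ - 2*β₀₁*m₂) • α₂ := by
      rw [Matrix.transpose_sub, vmv_transpose, vmv_transpose, Matrix.sub_mulVec, vmv_mulVec,
        vmv_mulVec, ha1, Matrix.mulVec_smul, he2, Matrix.mulVec_smul, he4,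
        Matrix.transpose_sub, vmv_transpose, vmv_transpose, Matrix.sub_mulVec, vmv_mulVec,
        vmv_mulVec, ha3, cross_smul_right, hc3, cross_smul_left, cross_anti α₁ a'₁, hc4]
      module
    have E3 : A * (vecMulVec α₁ β'₂ - vecMulVec β'₁ α₂)
          - (vecMulVec α₁ β'₂ - vecMulVec β'₁ α₂) * A
          + (3:ℂ) • (vecMulVec (β'₀₁ • α₁) a₂ - vecMulVec a₁ (β'₀₂ • α₂))
          - (a₂ ⬝ᵥ (β'₀₁ • α₁) - a₁ ⬝ᵥ (β'₀₂ • α₂)) • (1 : Matrix (Fin 3) (Fin 3) ℂ)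
          + ((vecMulVec α₁ β₂ - vecMulVec β₁ α₂) * A'
            - A' * (vecMulVec α₁ β₂ - vecMulVec β₁ α₂)
            + (3:ℂ) • (vecMulVec a'₁ (β₀₂ • α₂) - vecMulVec (β₀₁ • α₁) a'₂)
            - ((β₀₂ • α₂) ⬝ᵥ a'₁ - (β₀₁ • α₁) ⬝ᵥ a'₂) • (1 : Matrix (Fin 3) (Fin 3) ℂ))
        = vecMulVec α₁ (κ₁ • β'₂ - Aᵀ *ᵥ β'₂ + A'ᵀ *ᵥ β₂ - κ'₁ • β₂ + (3*β'₀₁) • a₂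
            - (3*β₀₁) • a'₂)
          - vecMulVec (A *ᵥ β'₁ + κ₂ • β'₁ - κ'₂ • β₁ - A' *ᵥ β₁ + (3*β'₀₂) • a₁
            - (3*β₀₂) • a'₁) α₂ := by
      rw [dotProduct_comm a₂ (β'₀₁ • α₁), dotProduct_comm a₁ (β'₀₂ • α₂)]
      simp only [mul_sub, sub_mul, mul_vmv, vmv_mul, he1, he2, he3, he4, vmv_smul_left,
        vmv_smul_right, vmv_add_left, vmv_add_right, vmv_sub_left, vmv_sub_right,
        smul_dotProduct, dotProduct_smul, ha1, ha2, ha3, ha4, smul_eq_mul, mul_zero, zero_smul,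
        sub_zero, zero_sub, sub_self, neg_zero, zero_mul]
      module
    calc G a₁ a₂ A * R α₁ α₂ β'₀₁ β'₀₂ β'₁ β'₂ + R α₁ α₂ β₀₁ β₀₂ β₁ β₂ * G a'₁ a'₂ A'
          - G a'₁ a'₂ A' * R α₁ α₂ β₀₁ β₀₂ β₁ β₂ - R α₁ α₂ β'₀₁ β'₀₂ β'₁ β'₂ * G a₁ a₂ A
        = (G a₁ a₂ A * R α₁ α₂ β'₀₁ β'₀₂ β'₁ β'₂ - R α₁ α₂ β'₀₁ β'₀₂ β'₁ β'₂ * G a₁ a₂ A)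
          + (R α₁ α₂ β₀₁ β₀₂ β₁ β₂ * G a'₁ a'₂ A' - G a'₁ a'₂ A' * R α₁ α₂ β₀₁ β₀₂ β₁ β₂) := by
          abel
      _ = R α₁ α₂ (β'₀₁*κ₁ - β'₂ ⬝ᵥ a₁ + 2*β'₀₂*l₁ + β₂ ⬝ᵥ a'₁ - β₀₁*κ'₁ - 2*β₀₂*l₂)
            (β'₀₂*κ₂ - β'₁ ⬝ᵥ a₂ + 2*β'₀₁*m₁ + β₁ ⬝ᵥ a'₂ - β₀₂*κ'₂ - 2*β₀₁*m₂)
            (A *ᵥ β'₁ + κ₂ • β'₁ - κ'₂ • β₁ - A' *ᵥ β₁ + (3*β'₀₂) • a₁ - (3*β₀₂) • a'₁)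
            (κ₁ • β'₂ - Aᵀ *ᵥ β'₂ + A'ᵀ *ᵥ β₂ - κ'₁ • β₂ + (3*β'₀₁) • a₂ - (3*β₀₁) • a'₂) := by
          rw [R_eq_G α₁ α₂ β'₀₁ β'₀₂ β'₁ β'₂, R_eq_G α₁ α₂ β₀₁ β₀₂ β₁ β₂, G_brk, G_brk,
            hA, hA', trB, trB']
          simp only [zero_smul, sub_zero, zero_sub, neg_zero, sub_self, Ecorr_zero, add_zero]
          rw [G_add, E1, E2, E3, ← R_eq_G]
end

section
/- Suppose α₁ᵀα₂ = 0, and let μ, μ' ∈ ℂ, b₁, b₂, b'₁, b'₂ ∈ ℂ³, and B, B' be traceless 3×3 complex matrices with α₂ᵀBα₁ = 0 and α₂ᵀB'α₁ = 0. Then G(b₁,b₂,B)·(μ'·N) + (μ·N)·G(b'₁,b'₂,B') − G(b'₁,b'₂,B')·(μ·N) − (μ'·N)·G(b₁,b₂,B) = R(β̃₀₁, β̃₀₂, β̃₁, β̃₂), where β̃₀₁ = α₂ᵀ(μ·b'₁ − μ'·b₁), β̃₀₂ = α₁ᵀ(μ'·b₂ − μ·b'₂), β̃₁ = (μ·B'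 − μ'·B)·α₁, β̃₂ = (μ·B'ᵀ − μ'·Bᵀ)·α₂; moreover α₂ᵀβ̃₁ = 0 and α₁ᵀβ̃₂ = 0. -/
open Matrix

set_option maxHeartbeats 4000000 in
/-- G(b)·(μ'·N) + (μ·N)·G(b') − G(b')·(μ·N) − (μ'·N)·G(b) is the residue-type
matrix with β̃₀₁ = α₂ᵀ(μb'₁ − μ'b₁), β̃₀₂ = α₁ᵀ(μ'b₂ − μb'₂), β̃₁ = (μB' − μ'B)α₁,
β̃₂ = (μB'ᵀ − μ'Bᵀ)α₂; moreover α₂ᵀβ̃₁ = 0 and α₁ᵀβ̃₂ = 0. -/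
theorem stmt8 (α₁ α₂ : Fin 3 → ℂ) (h12 : α₁ ⬝ᵥ α₂ = 0)
    (μ μ' : ℂ) (b₁ b₂ b'₁ b'₂ : Fin 3 → ℂ) (B B' : Matrix (Fin 3) (Fin 3) ℂ)
    (hB : B.trace = 0) (hB' : B'.trace = 0)
    (hfB : α₂ ⬝ᵥ (B *ᵥ α₁) = 0) (hfB' : α₂ ⬝ᵥ (B' *ᵥ α₁) = 0) :
    (G b₁ b₂ B * (μ' • Nmat α₁ α₂) + (μ • Nmat α₁ α₂) * G b'₁ b'₂ B'
        - G b'₁ b'₂ B' * (μ • Nmat α₁ α₂) - (μ' • Nmat α₁ α₂) * G b₁ b₂ B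
      = R α₁ α₂ (α₂ ⬝ᵥ (μ • b'₁ - μ' • b₁)) (α₁ ⬝ᵥ (μ' • b₂ - μ • b'₂))
          ((μ • B' - μ' • B) *ᵥ α₁) ((μ • B'ᵀ - μ' • Bᵀ) *ᵥ α₂)) ∧
    α₂ ⬝ᵥ ((μ • B' - μ' • B) *ᵥ α₁) = 0 ∧
    α₁ ⬝ᵥ ((μ • B'ᵀ - μ' • Bᵀ) *ᵥ α₂) = 0 := by
  have h : α₁ 0 * α₂ 0 + α₁ 1 * α₂ 1 + α₁ 2 * α₂ 2 = 0 := by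
    simpa [dotProduct, Fin.sum_univ_three] using h12
  have hf : α₂ 0 * (B 0 0 * α₁ 0 + B 0 1 * α₁ 1 + B 0 2 * α₁ 2)
      + α₂ 1 * (B 1 0 * α₁ 0 + B 1 1 * α₁ 1 + B 1 2 * α₁ 2)
      + α₂ 2 * (B 2 0 * α₁ 0 + B 2 1 * α₁ 1 + B 2 2 * α₁ 2) = 0 := by
    simpa [dotProduct, mulVec, Fin.sum_univ_three] using hfB
  have hf' : α₂ 0 * (B' 0 0 * α₁ 0 + B' 0 1 * α₁ 1 + B' 0 2 * α₁ 2)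
      + α₂ 1 * (B' 1 0 * α₁ 0 + B' 1 1 * α₁ 1 + B' 1 2 * α₁ 2)
      + α₂ 2 * (B' 2 0 * α₁ 0 + B' 2 1 * α₁ 1 + B' 2 2 * α₁ 2) = 0 := by
    simpa [dotProduct, mulVec, Fin.sum_univ_three] using hfB'
  refine ⟨?_, ?_, ?_⟩
  · ext i j
    fin_cases i <;> fin_cases j <;>
      simp [G, R, Nmat, sk, vecMulVec, Matrix.mul_apply, Fintype.sum_sum_type,
        Fin.sum_univ_three, dotProduct, mulVec, Matrix.transpose_apply] <;>
      try ring
    · linear_combination (μ * b'₂ 2 - μ' * b₂ 2) * h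
    · linear_combination (μ' * b₂ 1 - μ * b'₂ 1) * h
    · linear_combination (μ' * b₂ 2 - μ * b'₂ 2) * h
    · linear_combination (μ * b'₂ 0 - μ' * b₂ 0) * h
    · linear_combination (μ * b'₂ 1 - μ' * b₂ 1) * h
    · linear_combination (μ' * b₂ 0 - μ * b'₂ 0) * h
    · linear_combination (μ' * b₁ 2 - μ * b'₁ 2) * h
    · linear_combination (μ * b'₁ 1 - μ' * b₁ 1) * h
    · linear_combination (μ * b'₁ 2 - μ' * b₁ 2) * h
    · linear_combination (μ' * b₁ 0 - μ * b'₁ 0) * h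
    · linear_combination (μ' * b₁ 1 - μ * b'₁ 1) * h
    · linear_combination (μ * b'₁ 0 - μ' * b₁ 0) * h
  · simp only [dotProduct, mulVec, Fin.sum_univ_three, Matrix.sub_apply,
      Matrix.smul_apply, smul_eq_mul, Pi.sub_apply, Pi.smul_apply]
    linear_combination μ * hf' - μ' * hf
  · simp only [dotProduct, mulVec, Fin.sum_univ_three, Matrix.sub_apply,
      Matrix.smul_apply, smul_eq_mul, Pi.sub_apply, Pi.smul_apply,
      Matrix.transpose_apply]
    linear_combination μ * hf' - μ' * hf
end

section
/- For all α₁, α₂, c'₁, c'₂ ∈ ℂ³ and every traceless 3×3 complex matrix C', the trace of N·G(c'₁,c'₂,C') equals 2·α₂ᵀC'α₁. Consequently, for all μ, μ' ∈ ℂ and traceless C, C', the trace of 2·μ·N·G(c'₁,c'₂,C') − 2·μ'·G(c₁,c₂,C)·N equals 4·μ·α₂ᵀC'α₁ − 4·μ'·α₂ᵀCα₁. -/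
open Matrix

lemma traceNG (α₁ α₂ a₁ a₂ : Fin 3 → ℂ) (A : Matrix (Fin 3) (Fin 3) ℂ) :
    Matrix.trace (Nmat α₁ α₂ * G a₁ a₂ A) = 2 * (α₂ ⬝ᵥ (A *ᵥ α₁)) := by
  simp [Matrix.trace, Matrix.diag, Matrix.mul_apply, Fintype.sum_sum_type,
    Fin.sum_univ_succ, Nmat, G, vecMulVec, dotProduct, Matrix.mulVec,
    Matrix.transpose_apply]
  ring

lemma traceGN (α₁ α₂ a₁ a₂ : Fin 3 → ℂ) (A : Matrix (Fin 3) (Fin 3) ℂ) :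
    Matrix.trace (G a₁ a₂ A * Nmat α₁ α₂) = 2 * (α₂ ⬝ᵥ (A *ᵥ α₁)) := by
  simp [Matrix.trace, Matrix.diag, Matrix.mul_apply, Fintype.sum_sum_type,
    Fin.sum_univ_succ, Nmat, G, vecMulVec, dotProduct, Matrix.mulVec,
    Matrix.transpose_apply]
  ring

/-- tr(N·G(c'₁,c'₂,C')) = 2·α₂ᵀC'α₁, and consequently
tr(2μ·N·G(c') − 2μ'·G(c)·N) = 4μ·α₂ᵀC'α₁ − 4μ'·α₂ᵀCα₁. -/
theorem stmt12 (α₁ α₂ : Fin 3 → ℂ) (c₁ c₂ c'₁ c'₂ : Fin 3 → ℂ) (μ μ' : ℂ)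
    (C C' : Matrix (Fin 3) (Fin 3) ℂ) (hC : C.trace = 0) (hC' : C'.trace = 0) :
    Matrix.trace (Nmat α₁ α₂ * G c'₁ c'₂ C') = 2 * (α₂ ⬝ᵥ (C' *ᵥ α₁)) ∧
    Matrix.trace ((2 * μ) • (Nmat α₁ α₂ * G c'₁ c'₂ C')
        - (2 * μ') • (G c₁ c₂ C * Nmat α₁ α₂))
      = 4 * μ * (α₂ ⬝ᵥ (C' *ᵥ α₁)) - 4 * μ' * (α₂ ⬝ᵥ (C *ᵥ α₁)) := by
  refine ⟨traceNG α₁ α₂ c'₁ c'₂ C', ?_⟩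
  rw [Matrix.trace_sub, Matrix.trace_smul, Matrix.trace_smul,
    traceNG α₁ α₂ c'₁ c'₂ C', traceGN α₁ α₂ c₁ c₂ C]
  simp [smul_eq_mul]; ring
end

section
/- Suppose a₁, a₂, a'₁, a'₂ ∈ ℂ³ and traceless 3×3 matrices A, A' satisfy α₁ᵀa₂ = α₂ᵀa₁ = α₁ᵀa'₂ = α₂ᵀa'₁ = 0, A·α₁ = κ₁·α₁, Aᵀ·α₂ = −κ₂·α₂, A'·α₁ = κ'₁·α₁, A'ᵀ·α₂ = −κ'₂·α₂. Let Ĉ be the 3×3 block (rows 2–4, columns 2–4) of the commutator G(a₁,a₂,A)·G(a'₁,a'₂,A') − G(a'₁,a'₂,A')·G(a₁,a₂,A). Then Ĉ·α₁ = (a₁ᵀa'₂ − a₂ᵀa'₁)·α₁ and Ĉᵀ·α₂ = (a₁ᵀa'₂ − a₂ᵀa'₁)·α₂; in particular the sum of the two eigenvalues κ₁ + κ₂ attached to the commutator (defined by Ĉα₁ = κ₁α₁ and −Ĉᵀα₂ = κ₂α₂) is zero. -/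
open Matrix

/-- For the (2,2) block Ĉ of the commutator [G(a₁,a₂,A), G(a'₁,a'₂,A')],
Ĉ·α₁ = (a₁ᵀa'₂ − a₂ᵀa'₁)·α₁ and Ĉᵀ·α₂ = (a₁ᵀa'₂ − a₂ᵀa'₁)·α₂; in particular the sum
κ₁ + κ₂ of the attached eigenvalues (Ĉα₁ = κ₁α₁, −Ĉᵀα₂ = κ₂α₂) is zero. -/
theorem stmt13 (α₁ α₂ : Fin 3 → ℂ) (a₁ a₂ a'₁ a'₂ : Fin 3 → ℂ)
    (A A' : Matrix (Fin 3) (Fin 3) ℂ) (hA : A.trace = 0) (hA' : A'.trace = 0)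
    (ha1 : α₁ ⬝ᵥ a₂ = 0) (ha2 : α₂ ⬝ᵥ a₁ = 0)
    (ha3 : α₁ ⬝ᵥ a'₂ = 0) (ha4 : α₂ ⬝ᵥ a'₁ = 0)
    (κ₁ κ₂ κ'₁ κ'₂ : ℂ)
    (he1 : A *ᵥ α₁ = κ₁ • α₁) (he2 : Aᵀ *ᵥ α₂ = (-κ₂) • α₂)
    (he3 : A' *ᵥ α₁ = κ'₁ • α₁) (he4 : A'ᵀ *ᵥ α₂ = (-κ'₂) • α₂) :
    blk22 (G a₁ a₂ A * G a'₁ a'₂ A' - G a'₁ a'₂ A' * G a₁ a₂ A) *ᵥ α₁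
        = (a₁ ⬝ᵥ a'₂ - a₂ ⬝ᵥ a'₁) • α₁ ∧
    (blk22 (G a₁ a₂ A * G a'₁ a'₂ A' - G a'₁ a'₂ A' * G a₁ a₂ A))ᵀ *ᵥ α₂
        = (a₁ ⬝ᵥ a'₂ - a₂ ⬝ᵥ a'₁) • α₂ := by
  have E1 : ∀ i, A i 0 * α₁ 0 + A i 1 * α₁ 1 + A i 2 * α₁ 2 = κ₁ * α₁ i := fun i => by
    simpa [Matrix.mulVec, dotProduct, Fin.sum_univ_three] using congrFun he1 i
  have E3 : ∀ i, A' i 0 * α₁ 0 + A' i 1 * α₁ 1 + A' i 2 * α₁ 2 = κ'₁ * α₁ i := fun i => by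
    simpa [Matrix.mulVec, dotProduct, Fin.sum_univ_three] using congrFun he3 i
  have E2 : ∀ i, A 0 i * α₂ 0 + A 1 i * α₂ 1 + A 2 i * α₂ 2 = -κ₂ * α₂ i := fun i => by
    simpa [Matrix.mulVec, dotProduct, Fin.sum_univ_three, Matrix.transpose_apply] using
      congrFun he2 i
  have E4 : ∀ i, A' 0 i * α₂ 0 + A' 1 i * α₂ 1 + A' 2 i * α₂ 2 = -κ'₂ * α₂ i := fun i => by
    simpa [Matrix.mulVec, dotProduct, Fin.sum_univ_three, Matrix.transpose_apply] using
      congrFun he4 i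
  have H1 : α₁ 0 * a₂ 0 + α₁ 1 * a₂ 1 + α₁ 2 * a₂ 2 = 0 := by
    simpa [dotProduct, Fin.sum_univ_three] using ha1
  have H3 : α₁ 0 * a'₂ 0 + α₁ 1 * a'₂ 1 + α₁ 2 * a'₂ 2 = 0 := by
    simpa [dotProduct, Fin.sum_univ_three] using ha3
  have H2 : α₂ 0 * a₁ 0 + α₂ 1 * a₁ 1 + α₂ 2 * a₁ 2 = 0 := by
    simpa [dotProduct, Fin.sum_univ_three] using ha2
  have H4 : α₂ 0 * a'₁ 0 + α₂ 1 * a'₁ 1 + α₂ 2 * a'₁ 2 = 0 := by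
    simpa [dotProduct, Fin.sum_univ_three] using ha4
  constructor
  · funext p
    fin_cases p <;>
      simp [blk22, G, sk, Matrix.mulVec, Matrix.sub_apply, Matrix.mul_apply, dotProduct,
        Fintype.sum_sum_type, Fin.sum_univ_three, Fin.sum_univ_one]
    · linear_combination A 0 0 * E3 0 + A 0 1 * E3 1 + A 0 2 * E3 2 + κ'₁ * E1 0
        - (A' 0 0 * E1 0 + A' 0 1 * E1 1 + A' 0 2 * E1 2) - κ₁ * E3 0
        + (1 + sq2*sq2) * (a'₁ 0 * H1 - a₁ 0 * H3)
    · linear_combination A 1 0 * E3 0 + A 1 1 * E3 1 + A 1 2 * E3 2 + κ'₁ * E1 1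
        - (A' 1 0 * E1 0 + A' 1 1 * E1 1 + A' 1 2 * E1 2) - κ₁ * E3 1
        + (1 + sq2*sq2) * (a'₁ 1 * H1 - a₁ 1 * H3)
    · linear_combination A 2 0 * E3 0 + A 2 1 * E3 1 + A 2 2 * E3 2 + κ'₁ * E1 2
        - (A' 2 0 * E1 0 + A' 2 1 * E1 1 + A' 2 2 * E1 2) - κ₁ * E3 2
        + (1 + sq2*sq2) * (a'₁ 2 * H1 - a₁ 2 * H3)
  · funext p
    fin_cases p <;>
      simp [blk22, G, sk, Matrix.mulVec, Matrix.sub_apply, Matrix.mul_apply, dotProduct,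
        Fintype.sum_sum_type, Fin.sum_univ_three, Fin.sum_univ_one, Matrix.transpose_apply]
    · linear_combination A' 0 0 * E2 0 + A' 1 0 * E2 1 + A' 2 0 * E2 2 + (-κ₂) * E4 0
        - (A 0 0 * E4 0 + A 1 0 * E4 1 + A 2 0 * E4 2) - (-κ'₂) * E2 0
        + (1 + sq2*sq2) * (a₂ 0 * H4 - a'₂ 0 * H2)
    · linear_combination A' 0 1 * E2 0 + A' 1 1 * E2 1 + A' 2 1 * E2 2 + (-κ₂) * E4 1
        - (A 0 1 * E4 0 + A 1 1 * E4 1 + A 2 1 * E4 2) - (-κ'₂) * E2 1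
        + (1 + sq2*sq2) * (a₂ 1 * H4 - a'₂ 1 * H2)
    · linear_combination A' 0 2 * E2 0 + A' 1 2 * E2 1 + A' 2 2 * E2 2 + (-κ₂) * E4 2
        - (A 0 2 * E4 0 + A 1 2 * E4 1 + A 2 2 * E4 2) - (-κ'₂) * E2 2
        + (1 + sq2*sq2) * (a₂ 2 * H4 - a'₂ 2 * H2)
end

section
/- Suppose α₁ᵀα₂ = 0. Then: (i) for every traceless 3×3 matrix B' with α₂ᵀB'α₁ = 0 and all b'₁, b'₂ ∈ ℂ³, the trace of N·G(b'₁,b'₂,B') is zero; (ii) for all a₁, a₂ ∈ ℂ³ and traceless A with α₁ᵀa₂ = α₂ᵀa₁ = 0, A·α₁ = κ₁·α₁, Aᵀ·α₂ = −κ₂·α₂, and all β'₀₁, β'₀₂ ∈ ℂ, β'₁, β'₂ ∈ ℂ³ with α₁ᵀβ'₂ = 0 and α₂ᵀβ'₁ = 0, the trace of G(a₁,a₂,A)·R(β'₀₁,β'₀₂,β'₁,β'₂) is zero; (iii) for every traceless B with α₂ᵀBα₁ = 0 and all b₁, b₂ ∈ ℂ³, the trace of G(b₁,b₂,B)·N is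 zero. (These give the vanishing of the order −2 coefficient of the 1-form tr(L dL').) -/
open Matrix

/-- Suppose α₁ᵀα₂ = 0. Then (i) tr(N·G(b'₁,b'₂,B')) = 0 whenever B' is traceless
with α₂ᵀB'α₁ = 0; (ii) tr(G(a₁,a₂,A)·R(β')) = 0 under the stated orthogonality and eigenvalue
conditions; (iii) tr(G(b₁,b₂,B)·N) = 0 whenever B is traceless with α₂ᵀBα₁ = 0. -/
theorem stmt15 (α₁ α₂ : Fin 3 → ℂ) (h12 : α₁ ⬝ᵥ α₂ = 0) :
    (∀ (b'₁ b'₂ : Fin 3 → ℂ) (B' : Matrix (Fin 3) (Fin 3) ℂ),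
      B'.trace = 0 → α₂ ⬝ᵥ (B' *ᵥ α₁) = 0 →
      Matrix.trace (Nmat α₁ α₂ * G b'₁ b'₂ B') = 0) ∧
    (∀ (a₁ a₂ : Fin 3 → ℂ) (A : Matrix (Fin 3) (Fin 3) ℂ) (κ₁ κ₂ : ℂ)
        (β'₀₁ β'₀₂ : ℂ) (β'₁ β'₂ : Fin 3 → ℂ),
      A.trace = 0 → α₁ ⬝ᵥ a₂ = 0 → α₂ ⬝ᵥ a₁ = 0 →
      A *ᵥ α₁ = κ₁ • α₁ → Aᵀ *ᵥ α₂ = (-κ₂) • α₂ →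
      α₁ ⬝ᵥ β'₂ = 0 → α₂ ⬝ᵥ β'₁ = 0 →
      Matrix.trace (G a₁ a₂ A * R α₁ α₂ β'₀₁ β'₀₂ β'₁ β'₂) = 0) ∧
    (∀ (b₁ b₂ : Fin 3 → ℂ) (B : Matrix (Fin 3) (Fin 3) ℂ),
      B.trace = 0 → α₂ ⬝ᵥ (B *ᵥ α₁) = 0 →
      Matrix.trace (G b₁ b₂ B * Nmat α₁ α₂) = 0) := by
  constructor
  · intro b'₁ b'₂ B' htr hB'
    simp only [Matrix.mulVec, dotProduct, Fin.sum_univ_three,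
      Matrix.trace, Matrix.diag, Matrix.mul_apply, Fintype.sum_sum_type,
      Fin.sum_univ_one, Nmat, G, sk, Matrix.vecMulVec_apply, Matrix.of_apply,
      Matrix.transpose_apply, Matrix.cons_val', Matrix.cons_val_zero,
      Matrix.cons_val_one, Matrix.head_cons, Matrix.empty_val',
      Matrix.cons_val_fin_one, Matrix.head_fin_const, Matrix.cons_val_two,
      Matrix.tail_cons, Finset.sum_apply] at hB' ⊢
    linear_combination (2:ℂ) * hB'
  constructor
  · intro a₁ a₂ A κ₁ κ₂ β'₀₁ β'₀₂ β'₁ β'₂ htr h1 h2 hE1 hE2 hb2 hb1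
    have e10 := congrFun hE1 0
    have e11 := congrFun hE1 1
    have e12 := congrFun hE1 2
    have e20 := congrFun hE2 0
    have e21 := congrFun hE2 1
    have e22 := congrFun hE2 2
    simp only [Matrix.mulVec, dotProduct, Fin.sum_univ_three,
      Pi.smul_apply, smul_eq_mul, Matrix.transpose_apply] at e10 e11 e12 e20 e21 e22 h1 h2 hb1 hb2
    simp only [Matrix.trace, Matrix.diag, Matrix.mul_apply, Fintype.sum_sum_type,
      Fin.sum_univ_one, Fin.sum_univ_three, G, R, sk, Matrix.vecMulVec_apply,
      Matrix.of_apply, Matrix.transpose_apply, Matrix.sub_apply, Matrix.cons_val',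
      Matrix.cons_val_zero, Matrix.cons_val_one, Matrix.head_cons,
      Matrix.empty_val', Matrix.cons_val_fin_one, Matrix.head_fin_const,
      Matrix.cons_val_two, Matrix.tail_cons, Finset.sum_apply]
    linear_combination (-(2*sq2*sq2 + 2)*β'₀₁) * h1 + (-(2*sq2*sq2 + 2)*β'₀₂) * h2
      + 2*(β'₂ 0)*e10 + 2*(β'₂ 1)*e11 + 2*(β'₂ 2)*e12 + 2*κ₁*hb2
      + (-2*(β'₁ 0))*e20 + (-2*(β'₁ 1))*e21 + (-2*(β'₁ 2))*e22 + 2*κ₂*hb1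
  · intro b₁ b₂ B htr hB
    simp only [Matrix.mulVec, dotProduct, Fin.sum_univ_three,
      Matrix.trace, Matrix.diag, Matrix.mul_apply, Fintype.sum_sum_type,
      Fin.sum_univ_one, Nmat, G, sk, Matrix.vecMulVec_apply, Matrix.of_apply,
      Matrix.transpose_apply, Matrix.cons_val', Matrix.cons_val_zero,
      Matrix.cons_val_one, Matrix.head_cons, Matrix.empty_val',
      Matrix.cons_val_fin_one, Matrix.head_fin_const, Matrix.cons_val_two,
      Matrix.tail_cons, Finset.sum_apply] at hB ⊢
    linear_combination (2:ℂ) * hB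
end

section
/- Suppose α₁ᵀβ₂ = 0 and α₂ᵀβ₁ = 0, and let w₁, w₂ ∈ ℂ³ and a traceless 3×3 matrix W satisfy α₁ᵀw₂ = 0, α₂ᵀw₁ = 0, W·α₁ = κ̃₁·α₁, Wᵀ·α₂ = −κ̃₂·α₂ for some κ̃₁, κ̃₂ ∈ ℂ. Then the trace of R(β₀₁,β₀₂,β₁,β₂)·G(w₁,w₂,W) is zero. -/
open Matrix

/-- Under the stated orthogonality and eigenvalue hypotheses on w₁, w₂, W,
tr(R(β₀₁,β₀₂,β₁,β₂)·G(w₁,w₂,W)) = 0. -/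
theorem stmt16 (α₁ α₂ β₁ β₂ w₁ w₂ : Fin 3 → ℂ) (β₀₁ β₀₂ tκ₁ tκ₂ : ℂ)
    (W : Matrix (Fin 3) (Fin 3) ℂ) (hW : W.trace = 0)
    (h1 : α₁ ⬝ᵥ β₂ = 0) (h2 : α₂ ⬝ᵥ β₁ = 0)
    (h3 : α₁ ⬝ᵥ w₂ = 0) (h4 : α₂ ⬝ᵥ w₁ = 0)
    (h5 : W *ᵥ α₁ = tκ₁ • α₁) (h6 : Wᵀ *ᵥ α₂ = (-tκ₂) • α₂) :
    Matrix.trace (R α₁ α₂ β₀₁ β₀₂ β₁ β₂ * G w₁ w₂ W) = 0 := by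
  have h50 := congrFun h5 0
  have h51 := congrFun h5 1
  have h52 := congrFun h5 2
  have h60 := congrFun h6 0
  have h61 := congrFun h6 1
  have h62 := congrFun h6 2
  simp [Matrix.mulVec, dotProduct, Fin.sum_univ_three, Matrix.transpose_apply,
    Pi.smul_apply, smul_eq_mul] at h50 h51 h52 h60 h61 h62 h1 h2 h3 h4
  simp [Matrix.trace, Matrix.mul_apply, Fintype.sum_sum_type, Fin.sum_univ_three,
    R, G, sk, Matrix.vecMulVec, Matrix.diag, Matrix.transpose_apply,
    Matrix.sub_apply, Matrix.of_apply]
  have hsq : sq2 * sq2 = 2 := by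
    rw [sq2, ← Complex.ofReal_mul, Real.mul_self_sqrt (by norm_num : (0:ℝ) ≤ 2)]
    norm_num
  linear_combination (-6*β₀₂)*h4 + (-6*β₀₁)*h3 + 2*β₂ 0*h50 + 2*β₂ 1*h51 + 2*β₂ 2*h52
    - 2*β₁ 0*h60 - 2*β₁ 1*h61 - 2*β₁ 2*h62 + 2*tκ₁*h1 + 2*tκ₂*h2
    + (-2*β₀₂*(α₂ 0*w₁ 0+α₂ 1*w₁ 1+α₂ 2*w₁ 2) - 2*β₀₁*(α₁ 0*w₂ 0+α₁ 1*w₂ 1+α₁ 2*w₂ 2))*hsq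
end

section
/- Suppose a₁, a₂ ∈ ℂ³ and the traceless 3×3 matrix A satisfy α₁ᵀa₂ = 0, α₂ᵀa₁ = 0, A·α₁ = κ₁·α₁, Aᵀ·α₂ = −κ₂·α₂, and suppose the parameters β̃₀₁, β̃₀₂ ∈ ℂ, β̃₁, β̃₂ ∈ ℂ³ satisfy the normalizations α₁ᵀβ̃₂ = 1 and α₂ᵀβ̃₁ = 1. Then the trace of G(a₁,a₂,A)·R(β̃₀₁,β̃₀₂,β̃₁,β̃₂) equals 2·(κ₁ + κ₂). -/
open Matrix

/-- With the normalizations α₁ᵀβ̃₂ = 1 and α₂ᵀβ̃₁ = 1 and the stated conditions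
on a₁, a₂, A, tr(G(a₁,a₂,A)·R(β̃₀₁,β̃₀₂,β̃₁,β̃₂)) = 2(κ₁ + κ₂). -/
theorem stmt17 (α₁ α₂ a₁ a₂ tβ₁ tβ₂ : Fin 3 → ℂ) (tβ₀₁ tβ₀₂ κ₁ κ₂ : ℂ)
    (A : Matrix (Fin 3) (Fin 3) ℂ) (hA : A.trace = 0)
    (ha1 : α₁ ⬝ᵥ a₂ = 0) (ha2 : α₂ ⬝ᵥ a₁ = 0)
    (he1 : A *ᵥ α₁ = κ₁ • α₁) (he2 : Aᵀ *ᵥ α₂ = (-κ₂) • α₂)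
    (hn1 : α₁ ⬝ᵥ tβ₂ = 1) (hn2 : α₂ ⬝ᵥ tβ₁ = 1) :
    Matrix.trace (G a₁ a₂ A * R α₁ α₂ tβ₀₁ tβ₀₂ tβ₁ tβ₂) = 2 * (κ₁ + κ₂) := by
  have e1 : ∀ p, A p 0 * α₁ 0 + A p 1 * α₁ 1 + A p 2 * α₁ 2 = κ₁ * α₁ p := by
    intro p
    have := congrFun he1 p
    simpa [Matrix.mulVec, dotProduct, Fin.sum_univ_three, mul_comm] using this
  have e2 : ∀ p, A 0 p * α₂ 0 + A 1 p * α₂ 1 + A 2 p * α₂ 2 = -κ₂ * α₂ p := by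
    intro p
    have := congrFun he2 p
    simpa [Matrix.mulVec, dotProduct, Matrix.transpose_apply, Fin.sum_univ_three,
      mul_comm] using this
  have d1 : α₁ 0 * a₂ 0 + α₁ 1 * a₂ 1 + α₁ 2 * a₂ 2 = 0 := by
    simpa [dotProduct, Fin.sum_univ_three] using ha1
  have d2 : α₂ 0 * a₁ 0 + α₂ 1 * a₁ 1 + α₂ 2 * a₁ 2 = 0 := by
    simpa [dotProduct, Fin.sum_univ_three] using ha2
  have n1 : α₁ 0 * tβ₂ 0 + α₁ 1 * tβ₂ 1 + α₁ 2 * tβ₂ 2 = 1 := by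
    simpa [dotProduct, Fin.sum_univ_three] using hn1
  have n2 : α₂ 0 * tβ₁ 0 + α₂ 1 * tβ₁ 1 + α₂ 2 * tβ₁ 2 = 1 := by
    simpa [dotProduct, Fin.sum_univ_three] using hn2
  simp only [Matrix.trace, Matrix.mul_apply, G, R, sk, Matrix.diag_apply, Matrix.of_apply,
    Fintype.sum_sum_type, Fin.sum_univ_three, Fin.sum_univ_one, Matrix.vecMulVec_apply,
    Matrix.sub_apply, Matrix.transpose_apply, Matrix.cons_val', Matrix.cons_val_zero,
    Matrix.cons_val_one, Matrix.head_cons, Matrix.empty_val', Matrix.cons_val_fin_one,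
    Matrix.head_fin_const, Matrix.cons_val_two, Matrix.tail_cons, Pi.sub_apply]
  linear_combination (2*tβ₂ 0) * e1 0 + (2*tβ₂ 1) * e1 1 + (2*tβ₂ 2) * e1 2
    + (-2*tβ₁ 0) * e2 0 + (-2*tβ₁ 1) * e2 1 + (-2*tβ₁ 2) * e2 2
    + 2*κ₁*n1 + 2*κ₂*n2
    + ((-2*sq2*sq2 - 2)*tβ₀₁) * d1 + ((-2*sq2*sq2 - 2)*tβ₀₂) * d2
end

section
/- Suppose α₁ᵀα₂ = 0, α₁ᵀβ'₂ = 0, α₂ᵀβ'₁ = 0, and the traceless 3×3 matrix B satisfies α₂ᵀBα₁ = 0. Let P = G(b₁,b₂,B)·R(β'₀₁,β'₀₂,β'₁,β'₂). Then α₂ᵀ·P₍₂₁₎ = 0, α₁ᵀ·P₍₃₁₎ = 0, P₍₂₂₎·α₁ = 0, and P₍₃₃₎·α₂ = 0; in particular α₁ is an eigenvector of P₍₂₂₎ with eigenvalue 0. -/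
open Matrix

/-- For P = G(b₁,b₂,B)·R(β'₀₁,β'₀₂,β'₁,β'₂) under the stated hypotheses,
α₂ᵀ·P₍₂₁₎ = 0, α₁ᵀ·P₍₃₁₎ = 0, P₍₂₂₎·α₁ = 0 and P₍₃₃₎·α₂ = 0; in particular α₁ is an
eigenvector of P₍₂₂₎ with eigenvalue 0. -/
theorem stmt19 (α₁ α₂ : Fin 3 → ℂ) (h12 : α₁ ⬝ᵥ α₂ = 0)
    (β'₀₁ β'₀₂ : ℂ) (β'₁ β'₂ b₁ b₂ : Fin 3 → ℂ)
    (hb3 : α₁ ⬝ᵥ β'₂ = 0) (hb4 : α₂ ⬝ᵥ β'₁ = 0)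
    (B : Matrix (Fin 3) (Fin 3) ℂ) (hB : B.trace = 0)
    (hfB : α₂ ⬝ᵥ (B *ᵥ α₁) = 0) :
    α₂ ⬝ᵥ blk21 (G b₁ b₂ B * R α₁ α₂ β'₀₁ β'₀₂ β'₁ β'₂) = 0 ∧
    α₁ ⬝ᵥ blk31 (G b₁ b₂ B * R α₁ α₂ β'₀₁ β'₀₂ β'₁ β'₂) = 0 ∧
    blk22 (G b₁ b₂ B * R α₁ α₂ β'₀₁ β'₀₂ β'₁ β'₂) *ᵥ α₁ = 0 ∧
    blk33 (G b₁ b₂ B * R α₁ α₂ β'₀₁ β'₀₂ β'₁ β'₂) *ᵥ α₂ = 0 := by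
  simp only [dotProduct, Fin.sum_univ_three, mulVec, Matrix.trace_fin_three] at h12 hb3 hb4 hfB hB
  refine ⟨?_, ?_, funext fun p => ?_, funext fun p => ?_⟩
  · simp [mulVec, dotProduct, blk21, blk31, blk22, blk33, Matrix.mul_apply, Fintype.sum_sum_type,
      Fin.sum_univ_succ, G, R, sk, vecMulVec, Matrix.sub_apply]
    linear_combination sq2 * β'₀₁ * hfB
  · simp [mulVec, dotProduct, blk21, blk31, blk22, blk33, Matrix.mul_apply, Fintype.sum_sum_type,
      Fin.sum_univ_succ, G, R, sk, vecMulVec, Matrix.sub_apply]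
    linear_combination (-sq2 * β'₀₂) * hfB
  · fin_cases p
    · simp [mulVec, dotProduct, blk21, blk31, blk22, blk33, Matrix.mul_apply, Fintype.sum_sum_type,
      Fin.sum_univ_succ, G, R, sk, vecMulVec, Matrix.sub_apply]
      linear_combination (-sq2^2*β'₀₂*b₁ 0 - (B 0 0*β'₁ 0 + B 0 1*β'₁ 1 + B 0 2*β'₁ 2))*h12
        + (B 0 0*α₁ 0 + B 0 1*α₁ 1 + B 0 2*α₁ 2)*hb3
    · simp [mulVec, dotProduct, blk21, blk31, blk22, blk33, Matrix.mul_apply, Fintype.sum_sum_type,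
      Fin.sum_univ_succ, G, R, sk, vecMulVec, Matrix.sub_apply]
      linear_combination (-sq2^2*β'₀₂*b₁ 1 - (B 1 0*β'₁ 0 + B 1 1*β'₁ 1 + B 1 2*β'₁ 2))*h12
        + (B 1 0*α₁ 0 + B 1 1*α₁ 1 + B 1 2*α₁ 2)*hb3
    · simp [mulVec, dotProduct, blk21, blk31, blk22, blk33, Matrix.mul_apply, Fintype.sum_sum_type,
      Fin.sum_univ_succ, G, R, sk, vecMulVec, Matrix.sub_apply]
      linear_combination (-sq2^2*β'₀₂*b₁ 2 - (B 2 0*β'₁ 0 + B 2 1*β'₁ 1 + B 2 2*β'₁ 2))*h12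
        + (B 2 0*α₁ 0 + B 2 1*α₁ 1 + B 2 2*α₁ 2)*hb3
  · fin_cases p
    · simp [mulVec, dotProduct, blk21, blk31, blk22, blk33, Matrix.mul_apply, Fintype.sum_sum_type,
      Fin.sum_univ_succ, G, R, sk, vecMulVec, Matrix.sub_apply]
      linear_combination (-sq2^2*β'₀₁*b₂ 0 + (B 0 0*β'₂ 0 + B 1 0*β'₂ 1 + B 2 0*β'₂ 2))*h12
        - (B 0 0*α₂ 0 + B 1 0*α₂ 1 + B 2 0*α₂ 2)*hb4
    · simp [mulVec, dotProduct, blk21, blk31, blk22, blk33, Matrix.mul_apply, Fintype.sum_sum_type,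
      Fin.sum_univ_succ, G, R, sk, vecMulVec, Matrix.sub_apply]
      linear_combination (-sq2^2*β'₀₁*b₂ 1 + (B 0 1*β'₂ 0 + B 1 1*β'₂ 1 + B 2 1*β'₂ 2))*h12
        - (B 0 1*α₂ 0 + B 1 1*α₂ 1 + B 2 1*α₂ 2)*hb4
    · simp [mulVec, dotProduct, blk21, blk31, blk22, blk33, Matrix.mul_apply, Fintype.sum_sum_type,
      Fin.sum_univ_succ, G, R, sk, vecMulVec, Matrix.sub_apply]
      linear_combination (-sq2^2*β'₀₁*b₂ 2 + (B 0 2*β'₂ 0 + B 1 2*β'₂ 1 + B 2 2*β'₂ 2))*h12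
        - (B 0 2*α₂ 0 + B 1 2*α₂ 1 + B 2 2*α₂ 2)*hb4
end
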